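/- arXiv:1607.07343 — 2 statements merged into one kernel-verified Lean document; each statement's English description precedes it below -/
import Mathlib

section
/- Assume that for ρ-almost every t ∈ 𝔗 and every ψ ∈ F, the function (s, x) ↦ k(t,x) k(s,x) f_*(x) ψ(s) is integrable on 𝔗 × S with respect to ρ ⊗ Π. Then for every ψ ∈ F and ρ-almost every t ∈ 𝔗: ∫_𝔗 σ(t,s) ψ(s) dρ(s) = ∫_S k(t,x) f_*(x) (K*ψ)(x) dΠ(x) − (∫_S k(t,x) f_*(x) dΠ(x)) · ∫_S f_*(x) (K*ψ)(x) dΠ(x). That is, the covariance operator Σ with kernel σ satisfies Σψ = K M_{f_*} K* ψ − (K M_{f_*} 1) ⟨f_*, K*ψ⟩_E, where M_{f_*} is multiplication by f_*. (Lemma 2.) -/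
open MeasureTheory
open scoped ENNReal NNReal

private lemma L2_mul_L2_integrable {α : Type*} [MeasurableSpace α] {μ : Measure α}
    {g h : α → ℝ} (hg : MemLp g 2 μ) (hh : MemLp h 2 μ) :
    Integrable (fun x => g x * h x) μ := by
  have : MemLp (g • h) 1 μ := hh.smul hg
  exact memLp_one_iff_integrable.mp this

/-- Lemma 2: the covariance operator `Σ` with kernel `σ` satisfies
`Σψ = K M_{f_*} K* ψ − (K M_{f_*} 1) ⟨f_*, K*ψ⟩_E`. -/
theorem covariance_operator_decomposition
    {S 𝔗 : Type*} [MeasurableSpace S] [MeasurableSpace 𝔗]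
    (PiM : Measure S) [IsFiniteMeasure PiM]
    (ρ : Measure 𝔗) [SigmaFinite ρ]
    (k : 𝔗 → S → ℝ) (hk : Measurable (Function.uncurry k))
    (hk2 : Integrable (fun p : 𝔗 × S => (k p.1 p.2) ^ 2) (ρ.prod PiM))
    -- F_* is a probability measure with density f_* ∈ E with respect to Π
    (f : S → ℝ) (hf : MemLp f 2 PiM) (hf_nonneg : 0 ≤ᵐ[PiM] f)
    (Fstar : Measure S) [IsProbabilityMeasure Fstar]
    (hFstar : Fstar = PiM.withDensity (fun x => ENNReal.ofReal (f x)))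
    (hkF2 : Integrable (fun p : 𝔗 × S => (k p.1 p.2) ^ 2) (ρ.prod Fstar))
    -- the covariance kernel σ
    (σ' : 𝔗 → 𝔗 → ℝ)
    (hσ : ∀ t s, σ' t s = ∫ x, k t x * k s x ∂Fstar
        - (∫ x, k t x ∂Fstar) * ∫ x, k s x ∂Fstar)
    -- the element ψ ∈ F
    (ψ : Lp ℝ 2 ρ)
    -- integrability assumption
    (hint : ∀ᵐ t ∂ρ,
      Integrable (fun p : 𝔗 × S => k t p.2 * k p.1 p.2 * f p.2 * ψ p.1) (ρ.prod PiM)) :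
    ∀ᵐ t ∂ρ,
      ∫ s, σ' t s * ψ s ∂ρ
        = ∫ x, k t x * f x * (∫ s, k s x * ψ s ∂ρ) ∂PiM
          - (∫ x, k t x * f x ∂PiM) * ∫ x, f x * (∫ s, k s x * ψ s ∂ρ) ∂PiM := by
  have hfm : AEMeasurable f PiM := hf.aestronglyMeasurable.aemeasurable
  -- converting Fstar integrals to PiM integrals
  have hFint : ∀ g : S → ℝ, ∫ x, g x ∂Fstar = ∫ x, f x * g x ∂PiM := by
    intro g
    rw [hFstar]
    have hd : (fun x => ENNReal.ofReal (f x))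
        = fun x => ((Real.toNNReal (f x) : ℝ≥0) : ℝ≥0∞) := rfl
    rw [hd, integral_withDensity_eq_integral_smul₀ hfm.real_toNNReal]
    refine integral_congr_ae ?_
    filter_upwards [hf_nonneg] with x hx
    simp [NNReal.smul_def, Real.coe_toNNReal _ hx]
  have hψ : MemLp (fun s => (ψ : 𝔗 → ℝ) s) 2 ρ := Lp.memLp ψ
  -- the function (s,x) ↦ k s x * f x * ψ s is integrable on the product
  have kmem : MemLp (Function.uncurry k) 2 (ρ.prod PiM) :=
    (memLp_two_iff_integrable_sq hk.aestronglyMeasurable).2 hk2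
  have hψ2 : Integrable (fun s => (ψ : 𝔗 → ℝ) s ^ 2) ρ :=
    (memLp_two_iff_integrable_sq hψ.1).1 hψ
  have hf2 : Integrable (fun x => f x ^ 2) PiM :=
    (memLp_two_iff_integrable_sq hf.1).1 hf
  have fψmem : MemLp (fun p : 𝔗 × S => (ψ : 𝔗 → ℝ) p.1 * f p.2) 2 (ρ.prod PiM) := by
    refine (memLp_two_iff_integrable_sq ?_).2 ?_
    · exact (hψ.1.comp_fst).mul (hf.1.comp_snd)
    · have h2 : Integrable (fun p : 𝔗 × S => (ψ : 𝔗 → ℝ) p.1 ^ 2 * f p.2 ^ 2) (ρ.prod PiM) :=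
        hψ2.mul_prod hf2
      refine h2.congr (Filter.Eventually.of_forall fun p => by ring)
  have H : Integrable (fun p : 𝔗 × S => k p.1 p.2 * f p.2 * (ψ : 𝔗 → ℝ) p.1) (ρ.prod PiM) := by
    have := L2_mul_L2_integrable kmem fψmem
    refine this.congr (Filter.Eventually.of_forall fun p => ?_)
    simp [Function.uncurry]; ring
  filter_upwards [hint] with t ht
  -- notation
  set g : S → ℝ := fun x => ∫ s, k s x * (ψ : 𝔗 → ℝ) s ∂ρ with hg
  -- integrability of the two pieces in s
  have I1 : Integrable (fun s => (∫ x, k t x * k s x * f x ∂PiM) * (ψ : 𝔗 → ℝ) s) ρ := by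
    refine ht.integral_prod_left.congr (Filter.Eventually.of_forall fun s => ?_)
    show ∫ x, k t x * k s x * f x * (ψ : 𝔗 → ℝ) s ∂PiM
        = (∫ x, k t x * k s x * f x ∂PiM) * (ψ : 𝔗 → ℝ) s
    exact integral_mul_const _ _
  have I2 : Integrable (fun s => (∫ x, k s x * f x ∂PiM) * (ψ : 𝔗 → ℝ) s) ρ := by
    refine H.integral_prod_left.congr (Filter.Eventually.of_forall fun s => ?_)
    show ∫ x, k s x * f x * (ψ : 𝔗 → ℝ) s ∂PiM
        = (∫ x, k s x * f x ∂PiM) * (ψ : 𝔗 → ℝ) s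
    exact integral_mul_const _ _
  -- first Fubini swap
  have swap1 : ∫ s, (∫ x, k t x * k s x * f x ∂PiM) * (ψ : 𝔗 → ℝ) s ∂ρ
      = ∫ x, k t x * f x * g x ∂PiM := by
    have e1 : ∫ s, (∫ x, k t x * k s x * f x ∂PiM) * (ψ : 𝔗 → ℝ) s ∂ρ
        = ∫ s, ∫ x, k t x * k s x * f x * (ψ : 𝔗 → ℝ) s ∂PiM ∂ρ :=
      integral_congr_ae (Filter.Eventually.of_forall fun s =>
        (integral_mul_const ((ψ : 𝔗 → ℝ) s) fun x => k t x * k s x * f x).symm)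
    rw [e1, integral_integral_swap ht]
    refine integral_congr_ae (Filter.Eventually.of_forall fun x => ?_)
    calc ∫ s, k t x * k s x * f x * (ψ : 𝔗 → ℝ) s ∂ρ
        = ∫ s, (k t x * f x) * (k s x * (ψ : 𝔗 → ℝ) s) ∂ρ := by
          refine integral_congr_ae (Filter.Eventually.of_forall fun s => by ring)
      _ = k t x * f x * g x := by rw [integral_const_mul]
  -- second Fubini swap
  have swap2 : ∫ s, (∫ x, k s x * f x ∂PiM) * (ψ : 𝔗 → ℝ) s ∂ρ
      = ∫ x, f x * g x ∂PiM := by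
    have e1 : ∫ s, (∫ x, k s x * f x ∂PiM) * (ψ : 𝔗 → ℝ) s ∂ρ
        = ∫ s, ∫ x, k s x * f x * (ψ : 𝔗 → ℝ) s ∂PiM ∂ρ :=
      integral_congr_ae (Filter.Eventually.of_forall fun s =>
        (integral_mul_const ((ψ : 𝔗 → ℝ) s) fun x => k s x * f x).symm)
    rw [e1, integral_integral_swap H]
    refine integral_congr_ae (Filter.Eventually.of_forall fun x => ?_)
    calc ∫ s, k s x * f x * (ψ : 𝔗 → ℝ) s ∂ρ
        = ∫ s, f x * (k s x * (ψ : 𝔗 → ℝ) s) ∂ρ := by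
          refine integral_congr_ae (Filter.Eventually.of_forall fun s => by ring)
      _ = f x * g x := by rw [integral_const_mul]
  -- shortcut for the constant
  have hA : ∫ x, k t x ∂Fstar = ∫ x, k t x * f x ∂PiM := by
    rw [hFint]
    exact integral_congr_ae (Filter.Eventually.of_forall fun x => mul_comm _ _)
  -- rewrite the integrand
  have e0 : ∀ s, σ' t s * (ψ : 𝔗 → ℝ) s
      = (∫ x, k t x * k s x * f x ∂PiM) * (ψ : 𝔗 → ℝ) s
        - (∫ x, k t x * f x ∂PiM) * ((∫ x, k s x * f x ∂PiM) * (ψ : 𝔗 → ℝ) s) := by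
    intro s
    rw [hσ t s, hFint (fun x => k t x * k s x), hFint (k t), hFint (k s)]
    have h1 : ∫ x, f x * (k t x * k s x) ∂PiM = ∫ x, k t x * k s x * f x ∂PiM :=
      integral_congr_ae (Filter.Eventually.of_forall fun x => by ring)
    have h2 : ∫ x, f x * k s x ∂PiM = ∫ x, k s x * f x ∂PiM :=
      integral_congr_ae (Filter.Eventually.of_forall fun x => by ring)
    have h3 : ∫ x, f x * k t x ∂PiM = ∫ x, k t x * f x ∂PiM :=
      integral_congr_ae (Filter.Eventually.of_forall fun x => by ring)
    rw [h1, h2, h3]; ring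
  calc ∫ s, σ' t s * (ψ : 𝔗 → ℝ) s ∂ρ
      = ∫ s, ((∫ x, k t x * k s x * f x ∂PiM) * (ψ : 𝔗 → ℝ) s
          - (∫ x, k t x * f x ∂PiM) * ((∫ x, k s x * f x ∂PiM) * (ψ : 𝔗 → ℝ) s)) ∂ρ :=
        integral_congr_ae (Filter.Eventually.of_forall fun s => e0 s)
    _ = (∫ s, (∫ x, k t x * k s x * f x ∂PiM) * (ψ : 𝔗 → ℝ) s ∂ρ)
          - (∫ x, k t x * f x ∂PiM) * ∫ s, (∫ x, k s x * f x ∂PiM) * (ψ : 𝔗 → ℝ) s ∂ρ := by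
        rw [integral_sub I1 (I2.const_mul _), integral_const_mul]
    _ = ∫ x, k t x * f x * g x ∂PiM
          - (∫ x, k t x * f x ∂PiM) * ∫ x, f x * g x ∂PiM := by rw [swap1, swap2]
end

section
/- Assume that for ρ-almost every t ∈ 𝔗 and every ψ ∈ F, the function (s, x) ↦ k(t,x) k(s,x) f_*(x) ψ(s) is integrable on 𝔗 × S with respect to ρ ⊗ Π. Then for every ψ ∈ F and ρ-almost every t ∈ 𝔗: ∫_𝔗 σ(t,s) ψ(s) dρ(s) = ∫_S k(t,x) ( (K*ψ)(x) − c_ψ ) dF_*(x), where c_ψ := ∫_𝔗 (∫_S k(s,x) dF_*(x)) ψ(s) dρ(s) = ⟨K f_*, ψ⟩_F. That is, the covariance operator Σ with kernel σ factorizes as Σ = H H*, with H φ := K(f_* φ) and H* ψ := K*ψ − ⟨K f_*, ψ⟩_F. -/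
open MeasureTheory
open scoped ENNReal

/-- The covariance operator `Σ` with kernel `σ` factorizes as `Σ = H H*`, with
`Hφ := K(f_* φ)` and `H*ψ := K*ψ − ⟨K f_*, ψ⟩_F`. -/
theorem covariance_operator_factorization
    {S 𝔗 : Type*} [MeasurableSpace S] [MeasurableSpace 𝔗]
    (PiM : Measure S) [IsFiniteMeasure PiM]
    (ρ : Measure 𝔗) [SigmaFinite ρ]
    (k : 𝔗 → S → ℝ) (hk : Measurable (Function.uncurry k))
    (hk2 : Integrable (fun p : 𝔗 × S => (k p.1 p.2) ^ 2) (ρ.prod PiM))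
    -- F_* is a probability measure with density f_* ∈ E with respect to Π
    (f : S → ℝ) (hf : MemLp f 2 PiM) (hf_nonneg : 0 ≤ᵐ[PiM] f)
    (Fstar : Measure S) [IsProbabilityMeasure Fstar]
    (hFstar : Fstar = PiM.withDensity (fun x => ENNReal.ofReal (f x)))
    (hkF2 : Integrable (fun p : 𝔗 × S => (k p.1 p.2) ^ 2) (ρ.prod Fstar))
    -- the covariance kernel σ
    (σ' : 𝔗 → 𝔗 → ℝ)
    (hσ : ∀ t s, σ' t s = ∫ x, k t x * k s x ∂Fstar
        - (∫ x, k t x ∂Fstar) * ∫ x, k s x ∂Fstar)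
    -- the element ψ ∈ F and the constant c_ψ = ⟨K f_*, ψ⟩_F
    (ψ : Lp ℝ 2 ρ) (cψ : ℝ)
    (hcψ : cψ = ∫ s, (∫ x, k s x ∂Fstar) * ψ s ∂ρ)
    -- integrability assumption
    (hint : ∀ᵐ t ∂ρ,
      Integrable (fun p : 𝔗 × S => k t p.2 * k p.1 p.2 * f p.2 * ψ p.1) (ρ.prod PiM)) :
    ∀ᵐ t ∂ρ,
      ∫ s, σ' t s * ψ s ∂ρ
        = ∫ x, k t x * ((∫ s, k s x * ψ s ∂ρ) - cψ) ∂Fstar := by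
  -- f as a nonnegative density, a.e. measurable
  have hf_aem : AEMeasurable f PiM := hf.aestronglyMeasurable.aemeasurable
  have hf_nn : AEMeasurable (fun x => (f x).toNNReal) PiM := hf_aem.real_toNNReal
  have hFd : (fun x => ENNReal.ofReal (f x)) = (fun x => ((f x).toNNReal : ℝ≥0∞)) := rfl
  -- transfer of integrals from Fstar to PiM
  have IF : ∀ g : S → ℝ, ∫ x, g x ∂Fstar = ∫ x, g x * f x ∂PiM := by
    intro g
    rw [hFstar, hFd, integral_withDensity_eq_integral_smul₀ hf_nn g]
    refine integral_congr_ae ?_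
    filter_upwards [hf_nonneg] with x hx
    simp [NNReal.smul_def, Real.coe_toNNReal _ hx, mul_comm]
  -- transfer of integrability from Fstar to PiM
  have ITF : ∀ g : S → ℝ, Integrable g Fstar ↔ Integrable (fun x => g x * f x) PiM := by
    intro g
    rw [hFstar, hFd, integrable_withDensity_iff_integrable_smul₀ hf_nn]
    refine integrable_congr ?_
    filter_upwards [hf_nonneg] with x hx
    simp [NNReal.smul_def, Real.coe_toNNReal _ hx, mul_comm]
  -- b s = ∫ k s x dFstar is square integrable over ρ (Cauchy-Schwarz)
  have hq : Integrable (fun s => ∫ x, (k s x) ^ 2 ∂Fstar) ρ := hkF2.integral_prod_left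
  have hb_meas : AEStronglyMeasurable (fun s => ∫ x, k s x ∂Fstar) ρ := by
    have : AEStronglyMeasurable (fun p : 𝔗 × S => k p.1 p.2) (ρ.prod Fstar) :=
      hk.aestronglyMeasurable
    exact this.integral_prod_right'
  have hb_sq : Integrable (fun s => (∫ x, k s x ∂Fstar) ^ 2) ρ := by
    refine Integrable.mono' hq ((hb_meas.mul hb_meas).congr ?_) ?_
    · filter_upwards with s
      show (∫ x, k s x ∂Fstar) * (∫ x, k s x ∂Fstar) = (∫ x, k s x ∂Fstar) ^ 2
      ring
    · filter_upwards [hkF2.prod_right_ae] with s hs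
      have hks_meas : AEStronglyMeasurable (fun x => k s x) Fstar :=
        (hk.of_uncurry_left).aestronglyMeasurable
      have hks : MemLp (fun x => k s x) 2 Fstar :=
        (memLp_two_iff_integrable_sq hks_meas).2 hs
      have habs : MemLp (fun x => |k s x|) 2 Fstar := by
        simpa [Real.norm_eq_abs] using hks.norm
      have h2 : ENNReal.ofReal (2 : ℝ) = 2 := by norm_num
      have hcs : ∫ x, |k s x| * 1 ∂Fstar ≤
          (∫ x, |k s x| ^ (2:ℝ) ∂Fstar) ^ ((1:ℝ)/2) * (∫ x, (1:ℝ) ^ (2:ℝ) ∂Fstar) ^ ((1:ℝ)/2) := by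
        refine integral_mul_le_Lp_mul_Lq_of_nonneg Real.HolderConjugate.two_two ?_ ?_ ?_ ?_
        · filter_upwards with x; positivity
        · filter_upwards with x; norm_num
        · rw [h2]; exact habs
        · rw [h2]; exact memLp_const 1
      have hone : (∫ x, (1:ℝ) ^ (2:ℝ) ∂Fstar) ^ ((1:ℝ)/2) = 1 := by
        simp
      have hsq_eq : ∫ x, |k s x| ^ (2:ℝ) ∂Fstar = ∫ x, (k s x) ^ 2 ∂Fstar := by
        refine integral_congr_ae (Filter.Eventually.of_forall fun x => ?_)
        show |k s x| ^ (2:ℝ) = (k s x) ^ 2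
        rw [show (2:ℝ) = ((2:ℕ):ℝ) by norm_num, Real.rpow_natCast, sq_abs]
      have hb_le : |∫ x, k s x ∂Fstar| ≤ (∫ x, (k s x) ^ 2 ∂Fstar) ^ ((1:ℝ)/2) := by
        rw [hsq_eq, hone, mul_one] at hcs
        calc |∫ x, k s x ∂Fstar| ≤ ∫ x, |k s x| ∂Fstar := by
              simpa [Real.norm_eq_abs] using
                norm_integral_le_integral_norm (fun x => k s x) (μ := Fstar)
          _ = ∫ x, |k s x| * 1 ∂Fstar := by simp
          _ ≤ _ := hcs
      have hq0 : 0 ≤ ∫ x, (k s x) ^ 2 ∂Fstar :=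
        integral_nonneg fun x => sq_nonneg _
      have hsq : |∫ x, k s x ∂Fstar| ^ 2 ≤ ((∫ x, (k s x) ^ 2 ∂Fstar) ^ ((1:ℝ)/2)) ^ 2 :=
        pow_le_pow_left₀ (abs_nonneg _) hb_le 2
      calc ‖(∫ x, k s x ∂Fstar) ^ 2‖ = |∫ x, k s x ∂Fstar| ^ 2 := by
            rw [Real.norm_eq_abs, abs_pow]
        _ ≤ ((∫ x, (k s x) ^ 2 ∂Fstar) ^ ((1:ℝ)/2)) ^ 2 := hsq
        _ = ∫ x, (k s x) ^ 2 ∂Fstar := by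
            rw [← Real.rpow_natCast ((∫ x, (k s x) ^ 2 ∂Fstar) ^ ((1:ℝ)/2)) 2,
              ← Real.rpow_mul hq0]
            norm_num
  have hb_mem : MemLp (fun s => ∫ x, k s x ∂Fstar) 2 ρ :=
    (memLp_two_iff_integrable_sq hb_meas).2 hb_sq
  have hψ_mem : MemLp (fun s => (ψ : 𝔗 → ℝ) s) 2 ρ := Lp.memLp ψ
  have I2 : Integrable (fun s => (∫ x, k s x ∂Fstar) * ψ s) ρ := by
    have h := MemLp.smul (r := 1) hψ_mem hb_mem
    rw [← memLp_one_iff_integrable]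
    exact h
  -- main argument, pointwise in t
  filter_upwards [hint, hkF2.prod_right_ae] with t hG hkt_sq
  -- k t is Fstar-integrable
  have hkt_meas : AEStronglyMeasurable (fun x => k t x) Fstar :=
    (hk.of_uncurry_left).aestronglyMeasurable
  have hkt_mem : MemLp (fun x => k t x) 2 Fstar :=
    (memLp_two_iff_integrable_sq hkt_meas).2 hkt_sq
  have hkt : Integrable (fun x => k t x) Fstar := hkt_mem.integrable one_le_two
  -- integrability of the first LHS term
  have I1 : Integrable (fun s => (∫ x, k t x * k s x * f x ∂PiM) * ψ s) ρ := by
    refine hG.integral_prod_left.congr (Filter.Eventually.of_forall fun s => ?_)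
    show ∫ x, k t x * k s x * f x * ψ s ∂PiM = (∫ x, k t x * k s x * f x ∂PiM) * ψ s
    rw [integral_mul_const]
  -- k t x * A x is Fstar-integrable
  have hktA : Integrable (fun x => k t x * (∫ s, k s x * ψ s ∂ρ)) Fstar := by
    rw [ITF]
    refine hG.integral_prod_right.congr (Filter.Eventually.of_forall fun x => ?_)
    show ∫ s, k t x * k s x * f x * ψ s ∂ρ
        = (k t x * (∫ s, k s x * ψ s ∂ρ)) * f x
    have h : (fun s => k t x * k s x * f x * (ψ : 𝔗 → ℝ) s)
        = fun s => (k t x * f x) * (k s x * ψ s) := by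
      funext s; ring
    rw [h, integral_const_mul]
    ring
  -- swap the order of integration
  have swap : ∫ s, ∫ x, k t x * k s x * f x * ψ s ∂PiM ∂ρ
      = ∫ x, ∫ s, k t x * k s x * f x * ψ s ∂ρ ∂PiM :=
    integral_integral_swap hG
  -- the computation
  calc ∫ s, σ' t s * ψ s ∂ρ
      = ∫ s, ((∫ x, k t x * k s x * f x ∂PiM) * ψ s
          - (∫ x, k t x ∂Fstar) * ((∫ x, k s x ∂Fstar) * ψ s)) ∂ρ := by
        refine integral_congr_ae (Filter.Eventually.of_forall fun s => ?_)
        show σ' t s * ψ s = _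
        rw [hσ t s, IF (fun x => k t x * k s x)]
        ring
    _ = (∫ s, (∫ x, k t x * k s x * f x ∂PiM) * ψ s ∂ρ)
          - ∫ s, (∫ x, k t x ∂Fstar) * ((∫ x, k s x ∂Fstar) * ψ s) ∂ρ :=
        integral_sub I1 (I2.const_mul _)
    _ = (∫ s, ∫ x, k t x * k s x * f x * ψ s ∂PiM ∂ρ) - (∫ x, k t x ∂Fstar) * cψ := by
        rw [integral_const_mul, ← hcψ]
        congr 1
        refine integral_congr_ae (Filter.Eventually.of_forall fun s => ?_)
        show (∫ x, k t x * k s x * f x ∂PiM) * ψ s = ∫ x, k t x * k s x * f x * ψ s ∂PiM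
        rw [integral_mul_const]
    _ = (∫ x, ∫ s, k t x * k s x * f x * ψ s ∂ρ ∂PiM) - (∫ x, k t x ∂Fstar) * cψ := by
        rw [swap]
    _ = (∫ x, (k t x * (∫ s, k s x * ψ s ∂ρ)) * f x ∂PiM) - (∫ x, k t x ∂Fstar) * cψ := by
        congr 1
        refine integral_congr_ae (Filter.Eventually.of_forall fun x => ?_)
        show ∫ s, k t x * k s x * f x * ψ s ∂ρ = (k t x * (∫ s, k s x * ψ s ∂ρ)) * f x
        have h : (fun s => k t x * k s x * f x * (ψ : 𝔗 → ℝ) s)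
            = fun s => (k t x * f x) * (k s x * ψ s) := by
          funext s; ring
        rw [h, integral_const_mul]
        ring
    _ = (∫ x, k t x * (∫ s, k s x * ψ s ∂ρ) ∂Fstar) - ∫ x, cψ * k t x ∂Fstar := by
        rw [← IF (fun x => k t x * (∫ s, k s x * ψ s ∂ρ)), integral_const_mul]
        ring
    _ = ∫ x, (k t x * (∫ s, k s x * ψ s ∂ρ) - cψ * k t x) ∂Fstar :=
        (integral_sub hktA (hkt.const_mul cψ)).symm
    _ = ∫ x, k t x * ((∫ s, k s x * ψ s ∂ρ) - cψ) ∂Fstar := by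
        refine integral_congr_ae (Filter.Eventually.of_forall fun x => ?_)
        show k t x * (∫ s, k s x * ψ s ∂ρ) - cψ * k t x
            = k t x * ((∫ s, k s x * ψ s ∂ρ) - cψ)
        ring
end
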